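/- In the quantum beam splitter scenario with R = 1/2 and polarization input cos α|H⟩ + sin α|V⟩, the squared visibility and squared polarization-enhanced distinguishability satisfy 𝒱² + (𝒟_i^P)² = 1 exactly, where 𝒱 = sin²α and 𝒟_i^P = √(1 − sin⁴α). -/

import Mathlib

/-!
The difference of the two conditional states is the real symmetric matrix
`A = !![c², sc/√2; sc/√2, 0]`. For any `2 × 2` matrix the singular values `σ₁, σ₂` satisfy
`σ₁² + σ₂² = tr (AᴴA)` and `σ₁σ₂ = |det A|`, so `‖A‖₁² = (σ₁ + σ₂)² = tr (AᴴA) + 2 |det A|`.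
Here this is `c⁴ + 2s²c² = (1 - s²)(1 + s²) = 1 - s⁴`.
-/

open ComplexOrder Matrix

/-- Trace norm ‖A‖₁ = Tr √(AᴴA). -/
noncomputable def traceNorm {n : Type*} [Fintype n] [DecidableEq n]
    (A : Matrix n n ℂ) : ℝ :=
  (((Matrix.posSemidef_conjTranspose_mul_self A).1.eigenvectorUnitary.1 *
      Matrix.diagonal (((↑) : ℝ → ℂ) ∘ (Real.sqrt ·) ∘ (Matrix.posSemidef_conjTranspose_mul_self A).1.eigenvalues) *
      (star (Matrix.posSemidef_conjTranspose_mul_self A).1.eigenvectorUnitary : Matrix n n ℂ)).trace).re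

lemma traceNorm_eq_sum_sqrt_eigenvalues {n : Type*} [Fintype n] [DecidableEq n]
    (A : Matrix n n ℂ) :
    traceNorm A = ∑ i, √((posSemidef_conjTranspose_mul_self A).1.eigenvalues i) := by
  rw [traceNorm, trace_mul_cycle]
  simp [trace_diagonal]

lemma traceNorm_fin_two (A : Matrix (Fin 2) (Fin 2) ℂ) :
    traceNorm A = √((Aᴴ * A).trace.re + 2 * ‖A.det‖) := by
  have hA := posSemidef_conjTranspose_mul_self A
  set μ := hA.1.eigenvalues
  have hsum : μ 0 + μ 1 = (Aᴴ * A).trace.re := by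
    simpa [Fin.sum_univ_two] using congrArg Complex.re hA.1.trace_eq_sum_eigenvalues.symm
  have hprod : μ 0 * μ 1 = ‖A.det‖ ^ 2 := by
    have hdet : (Aᴴ * A).det = (‖A.det‖ : ℂ) ^ 2 := by
      rw [det_mul, det_conjTranspose, Complex.star_def, Complex.conj_mul']
    have h := hA.1.det_eq_prod_eigenvalues
    rw [hdet, Fin.prod_univ_two] at h
    -- the spectral lemmas cast through `RCLike.ofReal`, which `norm_cast` does not identify with `Complex.ofReal`
    apply RCLike.ofReal_injective (K := ℂ)
    rw [RCLike.ofReal_mul, ← h, RCLike.ofReal_pow]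
    rfl
  have hsqrt : √(μ 0) * √(μ 1) = ‖A.det‖ := by
    rw [← Real.sqrt_mul (hA.eigenvalues_nonneg 0), hprod, Real.sqrt_sq (norm_nonneg _)]
  rw [traceNorm_eq_sum_sqrt_eigenvalues, Fin.sum_univ_two, ← hsum, ← hsqrt,
    ← Real.sqrt_sq (add_nonneg (Real.sqrt_nonneg _) (Real.sqrt_nonneg _))]
  congr 1
  rw [add_sq, Real.sq_sqrt (hA.eigenvalues_nonneg 0), Real.sq_sqrt (hA.eigenvalues_nonneg 1)]
  ring

lemma traceNorm_real_symm_fin_two (a b : ℝ) :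
    traceNorm !![(a : ℂ), b; b, 0] = √(a ^ 2 + 4 * b ^ 2) := by
  rw [traceNorm_fin_two]
  congr 1
  simp [trace_fin_two, det_fin_two, mul_apply, Fin.sum_univ_two]
  ring

/-- Quantum beam splitter with R = 1/2: the WPDR 𝒱² + (𝒟ᵢᴾ)² = 1 holds exactly,
with 𝒱 = sin²α and 𝒟ᵢᴾ = ‖σ₀ − σ₁‖₁ = √(1 − sin⁴α). -/
theorem qbs_tight (α : ℝ) :
    traceNorm
        ((!![(Real.cos α ^ 2 : ℂ), Real.sin α * Real.cos α * Real.sqrt (1/2);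
             Real.sin α * Real.cos α * Real.sqrt (1/2), Real.sin α ^ 2 * (1/2)])
          - !![0, 0; 0, (Real.sin α ^ 2 * (1/2) : ℂ)])
      = Real.sqrt (1 - Real.sin α ^ 4) ∧
    (Real.sin α ^ 2) ^ 2 +
      (traceNorm
        ((!![(Real.cos α ^ 2 : ℂ), Real.sin α * Real.cos α * Real.sqrt (1/2);
             Real.sin α * Real.cos α * Real.sqrt (1/2), Real.sin α ^ 2 * (1/2)])
          - !![0, 0; 0, (Real.sin α ^ 2 * (1/2) : ℂ)])) ^ 2 = 1 := by
  set s := Real.sin α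
  set c := Real.cos α
  have hdiff : !![(c ^ 2 : ℂ), s * c * √(1/2); s * c * √(1/2), s ^ 2 * (1/2)]
      - !![0, 0; 0, (s ^ 2 * (1/2) : ℂ)] = !![((c ^ 2 : ℝ) : ℂ), ((s * c * √(1/2) : ℝ) : ℂ);
        ((s * c * √(1/2) : ℝ) : ℂ), 0] := by
    ext i j
    fin_cases i <;> fin_cases j <;> simp
  have hnorm : (c ^ 2) ^ 2 + 4 * (s * c * √(1/2)) ^ 2 = 1 - s ^ 4 := by
    have hc : c ^ 2 = 1 - s ^ 2 := by linarith [Real.sin_sq_add_cos_sq α]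
    rw [mul_pow, Real.sq_sqrt (by norm_num), mul_pow, hc]
    ring
  have hD : traceNorm (!![(c ^ 2 : ℂ), s * c * √(1/2); s * c * √(1/2), s ^ 2 * (1/2)]
      - !![0, 0; 0, (s ^ 2 * (1/2) : ℂ)]) = √(1 - s ^ 4) := by
    rw [hdiff, traceNorm_real_symm_fin_two, hnorm]
  have hs4 : s ^ 4 ≤ 1 := by
    nlinarith [Real.sin_sq_le_one α, sq_nonneg s]
  refine ⟨hD, ?_⟩
  rw [hD, Real.sq_sqrt (sub_nonneg.mpr hs4)]
  ring
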